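/- For every real α > 0 and every ε ∈ (0,1), if s ∈ (0,1) is the unique point with g(s) = α·(1/ε − 1), then for x ∈ (0,1) one has φ_α(x) < ε if and only if x < s; in particular the set {x ∈ [0,1] : φ_α(x) < ε} equals the half-open interval [0, s) and its Lebesgue measure equals s. -/

import Mathlib

/-!
On `(0,1)` the quotient `f (1 - x) / f x` equals `g x`, so `phi α x = α / (α + g x)`. Hence
`phi α x < ε` exactly when `g x > α (1/ε - 1) = g s`, i.e. when `x < s` since `g` is strictly
decreasing. At the endpoints `phi α 0 = 0 < ε` and `phi α 1 = 1 ≥ ε`.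
-/

noncomputable def f (x : ℝ) : ℝ := if 0 < x then Real.exp (-1 / x) else 0

noncomputable def phi (α : ℝ) (x : ℝ) : ℝ := α * f x / (α * f x + f (1 - x))

noncomputable def g (x : ℝ) : ℝ := Real.exp (1 / x - 1 / (1 - x))

open Set

lemma f_of_pos {x : ℝ} (hx : 0 < x) : f x = Real.exp (-1 / x) := if_pos hx

lemma f_of_nonpos {x : ℝ} (hx : x ≤ 0) : f x = 0 := if_neg hx.not_gt

lemma f_pos {x : ℝ} (hx : 0 < x) : 0 < f x := by
  rw [f_of_pos hx]
  exact Real.exp_pos _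

lemma f_one_sub_eq_g_mul_f {x : ℝ} (hx : x ∈ Ioo (0 : ℝ) 1) : f (1 - x) = g x * f x := by
  rw [f_of_pos (sub_pos.2 hx.2), f_of_pos hx.1, g, ← Real.exp_add]
  ring_nf

lemma phi_eq_div_add_g (α : ℝ) {x : ℝ} (hx : x ∈ Ioo (0 : ℝ) 1) :
    phi α x = α / (α + g x) := by
  rw [phi, f_one_sub_eq_g_mul_f hx, ← add_mul, mul_div_mul_right _ _ (f_pos hx.1).ne']

lemma phi_zero (α : ℝ) : phi α 0 = 0 := by
  simp [phi, f_of_nonpos le_rfl]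

lemma phi_one {α : ℝ} (hα : α ≠ 0) : phi α 1 = 1 := by
  simp [phi, f_of_nonpos le_rfl, hα, (f_pos one_pos).ne']

lemma g_pos (x : ℝ) : 0 < g x := Real.exp_pos _

lemma g_strictAntiOn : StrictAntiOn g (Ioo (0 : ℝ) 1) := by
  intro x hx y hy hxy
  have h1 : 1 / y < 1 / x := one_div_lt_one_div_of_lt hx.1 hxy
  have h2 : 1 / (1 - x) < 1 / (1 - y) := one_div_lt_one_div_of_lt (by linarith [hy.2]) (by linarith)
  exact Real.exp_lt_exp.2 (by linarith)

lemma div_add_lt_iff {α t ε : ℝ} (ht : 0 < α + t) (hε : 0 < ε) :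
    α / (α + t) < ε ↔ α * (1 / ε - 1) < t := by
  rw [div_lt_iff₀ ht, show α * (1 / ε - 1) = α * (1 - ε) / ε by field_simp,
    div_lt_iff₀' hε]
  constructor <;> intro h <;> linarith

lemma phi_lt_iff_lt {α ε s : ℝ} (hα : 0 < α) (hε : 0 < ε) (hs : s ∈ Ioo (0 : ℝ) 1)
    (hgs : g s = α * (1 / ε - 1)) {x : ℝ} (hx : x ∈ Ioo (0 : ℝ) 1) :
    phi α x < ε ↔ x < s := by
  rw [phi_eq_div_add_g α hx, div_add_lt_iff (add_pos hα (g_pos x)) hε, ← hgs]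
  exact g_strictAntiOn.lt_iff_gt hs hx

lemma setOf_phi_lt_eq_Ico {α ε s : ℝ} (hα : 0 < α) (hε : ε ∈ Ioo (0 : ℝ) 1)
    (hs : s ∈ Ioo (0 : ℝ) 1) (hgs : g s = α * (1 / ε - 1)) :
    {x ∈ Icc (0 : ℝ) 1 | phi α x < ε} = Ico 0 s := by
  ext x
  simp only [mem_ofPred_eq, mem_Icc, mem_Ico]
  constructor
  · rintro ⟨⟨hx0, hx1⟩, hlt⟩
    refine ⟨hx0, ?_⟩
    rcases hx1.lt_or_eq with hx1 | rfl
    · rcases hx0.lt_or_eq with hx0 | rfl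
      · exact (phi_lt_iff_lt hα hε.1 hs hgs ⟨hx0, hx1⟩).1 hlt
      · exact hs.1
    · rw [phi_one hα.ne'] at hlt
      linarith [hε.2]
  · rintro ⟨hx0, hxs⟩
    refine ⟨⟨hx0, by linarith [hs.2]⟩, ?_⟩
    rcases hx0.lt_or_eq with hx0 | rfl
    · exact (phi_lt_iff_lt hα hε.1 hs hgs ⟨hx0, hxs.trans hs.2⟩).2 hxs
    · rw [phi_zero]
      exact hε.1

theorem phi_sublevel (α : ℝ) (hα : 0 < α) (ε : ℝ) (hε : ε ∈ Set.Ioo (0 : ℝ) 1)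
    (s : ℝ) (hs : s ∈ Set.Ioo (0 : ℝ) 1) (hgs : g s = α * (1 / ε - 1)) :
    (∀ x ∈ Set.Ioo (0 : ℝ) 1, (phi α x < ε ↔ x < s)) ∧
    {x ∈ Set.Icc (0 : ℝ) 1 | phi α x < ε} = Set.Ico 0 s ∧
    MeasureTheory.volume {x ∈ Set.Icc (0 : ℝ) 1 | phi α x < ε} = ENNReal.ofReal s := by
  have hset := setOf_phi_lt_eq_Ico hα hε hs hgs
  refine ⟨fun x hx => phi_lt_iff_lt hα hε.1 hs hgs hx, hset, ?_⟩
  rw [hset, Real.volume_Ico, sub_zero]
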